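/- arXiv:1509.02012 — 2 statements merged into one kernel-verified Lean document; each statement's English description precedes it below -/
import Mathlib

section
/- Let φ be a first-order formula with free variables x = x_in ∪ x_out, and let I be an interpretation with infinite domain Δ and finite active domain adom(I). Fix values d_in for x_in and let the answer set ans = { d_out ∈ Δ^n : I satisfies φ under the valuation assigning d_in to x_in and d_out to x_out }. If ans is finite, then every tuple in ans consists only of elements of adom(I) ∪ d_in; i.e., ans ⊆ (adom(I) ∪ {components of d_in})^n. -/
/-!
A permutation of the domain that fixes the active domain pointwise is an automorphism of a
structure whose only function symbols are constants, so it preserves satisfaction. If an answer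
had a component `a` outside `adom(I) ∪ range d_in`, swapping `a` with any other element `b`
outside this finite set would give another answer with `b` in the same place, so the answer set
would be infinite.
-/

open FirstOrder FirstOrder.Language

/-- The active domain of an interpretation. -/
def adom (L : FirstOrder.Language) (M : Type*) [L.Structure M] : Set M :=
  {d | (∃ (n : ℕ) (r : L.Relations n) (x : Fin n → M),
          Structure.RelMap r x ∧ d ∈ Set.range x) ∨
       ∃ c : L.Constants, Structure.funMap c (fun i => i.elim0) = d}

namespace FirstOrder.Language

variable {L : Language} {M : Type*} [L.Structure M]

lemma comp_eq_self_of_relMap {σ : Equiv.Perm M} (hσ : ∀ d ∈ adom L M, σ d = d)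
    {n : ℕ} {r : L.Relations n} {x : Fin n → M} (hx : Structure.RelMap r x) : σ ∘ x = x :=
  funext fun i => hσ _ (Or.inl ⟨n, r, x, hx, i, rfl⟩)

def Equiv.ofPermFixingAdom (hfun : ∀ n, IsEmpty (L.Functions (n + 1)))
    (σ : Equiv.Perm M) (hσ : ∀ d ∈ adom L M, σ d = d) : M ≃[L] M where
  toEquiv := σ
  map_fun' {n} f x := by
    cases n with
    | zero =>
      show σ (Structure.funMap f x) = Structure.funMap f (σ ∘ x)
      rw [Subsingleton.elim (σ ∘ x) x]
      exact hσ _ (Or.inr ⟨f, congrArg _ (Subsingleton.elim _ _)⟩)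
    | succ n => exact (hfun n).elim f
  map_rel' {n} r x := by
    show Structure.RelMap r (σ ∘ x) ↔ Structure.RelMap r x
    refine ⟨fun h => ?_, fun h => by rwa [comp_eq_self_of_relMap hσ h]⟩
    -- `σ` fixes the entries of `σ ∘ x`, which by injectivity are then the entries of `x`.
    have hfix : σ ∘ x = x :=
      funext fun i => σ.injective (congrFun (comp_eq_self_of_relMap hσ h) i)
    rwa [hfix] at h

theorem realize_swap_comp_of_notMem [DecidableEq M] (hfun : ∀ n, IsEmpty (L.Functions (n + 1)))
    {α β : Type*} (φ : L.Formula (α ⊕ β)) {d_in : α → M} {d_out : β → M} {a b : M}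
    (ha : a ∉ adom L M ∪ Set.range d_in) (hb : b ∉ adom L M ∪ Set.range d_in)
    (h : φ.Realize (Sum.elim d_in d_out)) :
    φ.Realize (Sum.elim d_in (Equiv.swap a b ∘ d_out)) := by
  have hfix : ∀ d ∈ adom L M ∪ Set.range d_in, Equiv.swap a b d = d := fun d hd =>
    Equiv.swap_apply_of_ne_of_ne (by rintro rfl; exact ha hd) (by rintro rfl; exact hb hd)
  let g := Equiv.ofPermFixingAdom hfun (Equiv.swap a b) fun d hd => hfix d (Or.inl hd)
  have hval : Sum.elim d_in (Equiv.swap a b ∘ d_out) = g ∘ Sum.elim d_in d_out := by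
    funext k
    cases k with
    | inl i => exact (hfix _ (Or.inr ⟨i, rfl⟩)).symm
    | inr k => rfl
  rwa [hval, StrongHomClass.realize_formula g]

end FirstOrder.Language

theorem stmt3_general (L : FirstOrder.Language)
    (hrel : ∀ n, IsEmpty (L.Functions (n + 1)))
    {M : Type*} [L.Structure M] [Infinite M]
    (hadom : (adom L M).Finite)
    {α β : Type*} [Finite α]
    (φ : L.Formula (α ⊕ β)) (d_in : α → M)
    (hfin : {d_out : β → M | φ.Realize (Sum.elim d_in d_out)}.Finite) :
    ∀ d_out ∈ {d_out : β → M | φ.Realize (Sum.elim d_in d_out)},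
      ∀ j : β, d_out j ∈ adom L M ∪ Set.range d_in := by
  classical
  intro d_out hd j
  by_contra hj
  have hcover : (adom L M ∪ Set.range d_in)ᶜ ⊆
      (fun d : β → M => d j) '' {d_out : β → M | φ.Realize (Sum.elim d_in d_out)} :=
    fun b hb => ⟨Equiv.swap (d_out j) b ∘ d_out,
      realize_swap_comp_of_notMem hrel φ hj hb hd, Equiv.swap_apply_left _ _⟩
  exact (hadom.union (Set.finite_range d_in)).infinite_compl ((hfin.image _).subset hcover)

/-- If the domain is infinite, the active domain is finite, and the answer set
of `φ` under the partial assignment `d_in` is finite, then every answer tuple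
takes all its components from `adom(I) ∪ range d_in`. -/
theorem stmt3 (L : FirstOrder.Language)
    [∀ n, Finite (L.Relations n)] [Finite L.Constants]
    (hrel : ∀ n, IsEmpty (L.Functions (n + 1)))
    {M : Type*} [L.Structure M] [Infinite M]
    (hadom : (adom L M).Finite)
    {α β : Type*} [Finite α] [Finite β]
    (φ : L.Formula (α ⊕ β)) (d_in : α → M)
    (hfin : {d_out : β → M | φ.Realize (Sum.elim d_in d_out)}.Finite) :
    ∀ d_out ∈ {d_out : β → M | φ.Realize (Sum.elim d_in d_out)},
      ∀ j : β, d_out j ∈ adom L M ∪ Set.range d_in :=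
  stmt3_general L hrel hadom φ d_in hfin
end

section
/- In any transition system built by Procedure-style saturation where (i) each new state introduces at most N fresh objects beyond the current accumulated active domain, (ii) every state's active domain has at most b' elements, and (iii) fresh objects are introduced only when fewer than N objects of the accumulated active domain lie outside the current state's active domain, the accumulated active domain ⋃_{q ∈ Q} adom(I(q)) never exceeds 2b' + N elements. -/
/-!
If every object of `O` already lies in the accumulated domain `A`, an expansion step adds nothing
to `A`. Otherwise fresh objects were allowed, so fewer than `N` objects of `A` lie outside the
expanded state's domain `D`; then `|A| < b' + N`, and the new state adds at most `b'` objects.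
-/

theorem Set.ncard_union_le_of_expansion {Δ : Type*} {A D O D' : Set Δ} {b' N : ℕ}
    (hDA : D ⊆ A) (hDfin : D.Finite) (hD : D.ncard ≤ b') (hD'sub : D' ⊆ D ∪ O)
    (hD' : D'.ncard ≤ b') (hfresh : ¬ O ⊆ A → (A \ D).ncard < N)
    (hA : A.ncard ≤ 2 * b' + N) : (A ∪ D').ncard ≤ 2 * b' + N := by
  by_cases hOA : O ⊆ A
  · rwa [Set.union_eq_left.2 (hD'sub.trans (Set.union_subset hDA hOA))]
  · have hAD : (A \ D).ncard < N := hfresh hOA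
    calc (A ∪ D').ncard ≤ A.ncard + D'.ncard := Set.ncard_union_le _ _
      _ ≤ (A \ D).ncard + D.ncard + D'.ncard := by
          gcongr; exact Set.ncard_le_ncard_sdiff_add_ncard _ _ hDfin
      _ ≤ 2 * b' + N := by omega

/-- Saturation bound on the accumulated active domain: `A n` is the accumulated
active domain after `n` expansion steps. Initially it is the active domain of
the initial state (at most `b'` elements). At each step, the state picked for
expansion has active domain `D ⊆ A n` with at most `b'` elements; a set `O` of
at most `N` objects disjoint from `D` is chosen, containing objects outside the
accumulated active domain only if fewer than `N` objects of `A n` lie outside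
`D`; and the new state's active domain `D'` satisfies `D' ⊆ D ∪ O` and
`|D'| ≤ b'`. Then the accumulated active domain never exceeds `2b' + N`
elements. -/
theorem stmt18 {Δ : Type*} (b' N : ℕ) (A : ℕ → Set Δ)
    (h0fin : (A 0).Finite) (h0 : (A 0).ncard ≤ b')
    (hstep : ∀ n : ℕ, ∃ D O D' : Set Δ,
      D ⊆ A n ∧ D.Finite ∧ D.ncard ≤ b' ∧
      O.Finite ∧ O.ncard ≤ N ∧ Disjoint O D ∧
      D' ⊆ D ∪ O ∧ D'.Finite ∧ D'.ncard ≤ b' ∧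
      (¬ O ⊆ A n → (A n \ D).ncard < N) ∧
      A (n + 1) = A n ∪ D') :
    ∀ n : ℕ, (A n).Finite ∧ (A n).ncard ≤ 2 * b' + N := by
  intro n
  induction n with
  | zero => exact ⟨h0fin, h0.trans (by omega)⟩
  | succ n ih =>
    obtain ⟨D, O, D', hDA, hDfin, hD, -, -, -, hD'sub, hD'fin, hD', hfresh, hA⟩ := hstep n
    rw [hA]
    exact ⟨ih.1.union hD'fin,
      Set.ncard_union_le_of_expansion hDA hDfin hD hD'sub hD' hfresh ih.2⟩
end
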